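/- arXiv:1204.2376 — 4 statements merged into one kernel-verified Lean document; each statement's English description precedes it below -/
import Mathlib

section
/- Let g : ℝ → ℝ be continuous and strictly decreasing with θ_m B_m > 0, and suppose x* in the open simplex satisfies θ_m B_m g(N x*_m) = θ_{m'} B_{m'} g(N x*_{m'}) for all m, m'. Then x* is the unique maximizer over the simplex {x : x_m ≥ 0, Σ x_m = 1} of L(x) = Σ_m ∫_0^{x_m} θ_m B_m g(Nz) dz. -/
/-!
Each summand `x ↦ ∫_0^x w_m g(Nz) dz` is strictly concave, so it lies strictly below its tangent
line at `x*_m` away from `x*_m`. The equilibrium condition says all these tangents have the same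
slope `c`, so summing them bounds `L(x) - L(x*)` by `c · ∑_m (x_m - x*_m) = 0`, strictly when
`x ≠ x*`.
-/

open Finset

theorem StrictAnti.intervalIntegral_lt_mul_sub {f : ℝ → ℝ} (hf : StrictAnti f)
    (hfc : Continuous f) {a b : ℝ} (hab : a ≠ b) :
    ∫ z in a..b, f z < f a * (b - a) := by
  rcases hab.lt_or_gt with h | h
  · have hlt : ∫ z in a..b, f z < ∫ _ in a..b, f a :=
      intervalIntegral.integral_lt_integral_of_continuousOn_of_le_of_exists_lt h
        hfc.continuousOn continuousOn_const (fun z hz => (hf hz.1).le)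
        ⟨b, Set.right_mem_Icc.2 h.le, hf h⟩
    simpa [mul_comm] using hlt
  · have hlt : ∫ _ in b..a, f a < ∫ z in b..a, f z :=
      intervalIntegral.integral_lt_integral_of_continuousOn_of_le_of_exists_lt h
        continuousOn_const hfc.continuousOn (fun z hz => hf.antitone hz.2)
        ⟨b, Set.left_mem_Icc.2 h.le, hf h⟩
    rw [intervalIntegral.integral_const, smul_eq_mul] at hlt
    rw [intervalIntegral.integral_symm]
    linarith

theorem sum_intervalIntegral_lt_of_apply_eq {ι : Type*} [Fintype ι] {f : ι → ℝ → ℝ}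
    (hf : ∀ i, StrictAnti (f i)) (hfc : ∀ i, Continuous (f i)) (a : ℝ) {xs x : ι → ℝ}
    (hxs : ∀ i j, f i (xs i) = f j (xs j)) (hsum : ∑ i, x i = ∑ i, xs i) (hne : x ≠ xs) :
    ∑ i, ∫ z in a..x i, f i z < ∑ i, ∫ z in a..xs i, f i z := by
  obtain ⟨i₀, hi₀⟩ := Function.ne_iff.1 hne
  obtain ⟨c, hc⟩ : ∃ c, ∀ i, f i (xs i) = c := ⟨_, fun i => hxs i i₀⟩
  have htangent : ∀ i, x i ≠ xs i → ∫ z in xs i..x i, f i z < c * (x i - xs i) := fun i hi =>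
    hc i ▸ (hf i).intervalIntegral_lt_mul_sub (hfc i) hi.symm
  have hgain : ∑ i, ∫ z in xs i..x i, f i z < ∑ i, c * (x i - xs i) := by
    refine sum_lt_sum (fun i _ => ?_) ⟨i₀, mem_univ _, htangent i₀ hi₀⟩
    rcases eq_or_ne (x i) (xs i) with h | h
    · simp [h]
    · exact (htangent i h).le
  have hzero : ∑ i, c * (x i - xs i) = 0 := by
    rw [← mul_sum, sum_sub_distrib, hsum, sub_self, mul_zero]
  have hsplit : ∀ i, ∫ z in a..x i, f i z = (∫ z in a..xs i, f i z) + ∫ z in xs i..x i, f i z :=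
    fun i => (intervalIntegral.integral_add_adjacent_intervals
      ((hfc i).intervalIntegrable _ _) ((hfc i).intervalIntegrable _ _)).symm
  rw [sum_congr rfl fun i _ => hsplit i, sum_add_distrib]
  linarith

theorem equilibrium_maximizes_potential_general (M : ℕ) (g : ℝ → ℝ)
    (hgc : Continuous g) (hg : StrictAnti g) (N : ℝ) (hN : 0 < N)
    (w : Fin M → ℝ) (hw : ∀ m, 0 < w m)
    (xs : Fin M → ℝ) (hsum : ∑ m, xs m = 1)
    (heq : ∀ m m', w m * g (N * xs m) = w m' * g (N * xs m')) :
    ∀ x : Fin M → ℝ, (∀ m, 0 ≤ x m) → (∑ m, x m) = 1 → x ≠ xs →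
      (∑ m, ∫ z in (0:ℝ)..(x m), w m * g (N * z))
        < ∑ m, ∫ z in (0:ℝ)..(xs m), w m * g (N * z) := by
  intro x _ hxsum hne
  have hanti : ∀ m, StrictAnti fun z => w m * g (N * z) := fun m =>
    (hg.comp_strictMono (strictMono_mul_left_of_pos hN)).const_mul (hw m)
  exact sum_intervalIntegral_lt_of_apply_eq hanti (fun m => by fun_prop) 0 heq
    (hxsum.trans hsum.symm) hne

/-- If `x*` in the open simplex equalizes `w m · g(N x*_m)` across channels, then `x*` is the
unique maximizer of `L(x) = ∑_m ∫_0^{x_m} w m g(Nz) dz` over the simplex. -/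
theorem equilibrium_maximizes_potential (M : ℕ) (hM : 1 ≤ M) (g : ℝ → ℝ)
    (hgc : Continuous g) (hg : StrictAnti g) (N : ℝ) (hN : 0 < N)
    (w : Fin M → ℝ) (hw : ∀ m, 0 < w m)
    (xs : Fin M → ℝ) (hpos : ∀ m, 0 < xs m) (hsum : ∑ m, xs m = 1)
    (heq : ∀ m m', w m * g (N * xs m) = w m' * g (N * xs m')) :
    ∀ x : Fin M → ℝ, (∀ m, 0 ≤ x m) → (∑ m, x m) = 1 → x ≠ xs →
      (∑ m, ∫ z in (0:ℝ)..(x m), w m * g (N * z))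
        < ∑ m, ∫ z in (0:ℝ)..(xs m), w m * g (N * z) :=
  equilibrium_maximizes_potential_general M g hgc hg N hN w hw xs hsum heq
end

section
/- Let x(t) be a trajectory of the evolutionary dynamics ẋ_m = α(U(m,x)/Ū(x) − 1) with U(m,x) = θ_m B_m g(N x_m), Ū(x) = (1/M)Σ_m U(m,x) > 0, and α > 0. Then d/dt L(x(t)) = (α/(M Ū(x))) · Σ_{m,m'} (U(m,x) − U(m',x))²/2 ≥ 0, where L(x) = Σ_m ∫_0^{x_m} θ_m B_m g(Nz) dz; equality holds iff U(m,x) = U(m',x) for all m, m'. -/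
/-! The chain rule and the fundamental theorem of calculus give
`dL/dt = ∑_m U_m ẋ_m = (α/Ū) ∑_m U_m (U_m − Ū)`, and since `M Ū = ∑_m U_m` this equals
`(α/(M Ū)) (M ∑_m U_m² − (∑_m U_m)²)`, which is Lagrange's identity
`M ∑_m U_m² − (∑_m U_m)² = ∑_{m,m'} (U_m − U_{m'})²/2` scaled by a positive factor. -/

open Finset

section PairwiseSquares

variable {ι : Type*} [Fintype ι]

theorem sum_sum_sub_sq_div_two (U : ι → ℝ) :
    ∑ i, ∑ j, (U i - U j) ^ 2 / 2 = Fintype.card ι * ∑ i, U i ^ 2 - (∑ i, U i) ^ 2 := by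
  simp only [sub_sq, add_div, sub_div, sum_add_distrib, sum_sub_distrib, sum_const, card_univ,
    nsmul_eq_mul, ← sum_div, ← mul_sum, ← sum_mul, sq (∑ i, U i)]
  ring

theorem sum_sum_sub_sq_div_two_eq_zero_iff (U : ι → ℝ) :
    ∑ i, ∑ j, (U i - U j) ^ 2 / 2 = 0 ↔ ∀ i j, U i = U j := by
  have hnonneg : ∀ i j, 0 ≤ (U i - U j) ^ 2 / 2 := fun i j => by positivity
  simp only [sum_eq_zero_iff_of_nonneg fun i _ => sum_nonneg fun j _ => hnonneg i j,
    sum_eq_zero_iff_of_nonneg fun j _ => hnonneg _ j]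
  simp [sub_eq_zero]

theorem sum_mul_replicator_eq (α Ub : ℝ) (U : ι → ℝ) (hUb : Ub ≠ 0)
    (hmean : Ub = (∑ i, U i) / Fintype.card ι) :
    ∑ i, U i * (α * (U i / Ub - 1)) =
      α / (Fintype.card ι * Ub) * ∑ i, ∑ j, (U i - U j) ^ 2 / 2 := by
  have hcard : (Fintype.card ι : ℝ) ≠ 0 := by
    rintro h
    rw [h, div_zero] at hmean
    exact hUb hmean
  have hsum : ∑ i, U i = Fintype.card ι * Ub := by
    rw [hmean]; field_simp
  have hterm : ∀ i, U i * (α * (U i / Ub - 1)) = α / Ub * U i ^ 2 - α * U i := fun i => by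
    field_simp
  rw [sum_congr rfl fun i _ => hterm i, sum_sub_distrib, ← mul_sum, ← mul_sum,
    sum_sum_sub_sq_div_two, hsum]
  field_simp

end PairwiseSquares

theorem HasDerivAt.integral_comp {f x : ℝ → ℝ} {x' t a : ℝ} (hf : Continuous f)
    (hx : HasDerivAt x x' t) :
    HasDerivAt (fun s => ∫ z in a..x s, f z) (f (x t) * x') t :=
  (hf.integral_hasStrictDerivAt a (x t)).hasDerivAt.comp t hx

theorem potential_derivative_general (M : ℕ) (α N : ℝ) (hα : 0 < α)
    (w : Fin M → ℝ)
    (g : ℝ → ℝ) (hgc : Continuous g)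
    (x : ℝ → Fin M → ℝ) (t : ℝ)
    (hUbar : 0 < (1 / (M : ℝ)) * ∑ i, w i * g (N * x t i))
    (hode : ∀ m, HasDerivAt (fun s => x s m)
      (α * (w m * g (N * x t m)
        / ((1 / (M : ℝ)) * ∑ i, w i * g (N * x t i)) - 1)) t) :
    HasDerivAt (fun s => ∑ m, ∫ z in (0:ℝ)..(x s m), w m * g (N * z))
        (α / ((M : ℝ) * ((1 / (M : ℝ)) * ∑ i, w i * g (N * x t i)))
          * ∑ m, ∑ m', (w m * g (N * x t m) - w m' * g (N * x t m')) ^ 2 / 2) t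
    ∧ 0 ≤ α / ((M : ℝ) * ((1 / (M : ℝ)) * ∑ i, w i * g (N * x t i)))
          * ∑ m, ∑ m', (w m * g (N * x t m) - w m' * g (N * x t m')) ^ 2 / 2
    ∧ (α / ((M : ℝ) * ((1 / (M : ℝ)) * ∑ i, w i * g (N * x t i)))
          * ∑ m, ∑ m', (w m * g (N * x t m) - w m' * g (N * x t m')) ^ 2 / 2 = 0
        ↔ ∀ m m', w m * g (N * x t m) = w m' * g (N * x t m')) := by
  set U : Fin M → ℝ := fun m => w m * g (N * x t m)
  set Ub : ℝ := (1 / (M : ℝ)) * ∑ i, U i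
  have hcoef : 0 < α / ((M : ℝ) * Ub) := by
    have hM : (0 : ℝ) < M := by
      rcases Nat.eq_zero_or_pos M with h | h
      · simp [Ub, h] at hUbar
      · exact_mod_cast h
    positivity
  have hderiv : HasDerivAt (fun s => ∑ m, ∫ z in (0:ℝ)..(x s m), w m * g (N * z))
      (∑ m, U m * (α * (U m / Ub - 1))) t :=
    HasDerivAt.fun_sum fun m _ =>
      HasDerivAt.integral_comp (f := fun z => w m * g (N * z)) (by fun_prop) (hode m)
  refine ⟨?_, mul_nonneg hcoef.le (by positivity), ?_⟩
  · have hmean : Ub = (∑ i, U i) / Fintype.card (Fin M) := by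
      rw [Fintype.card_fin]; exact one_div_mul_eq_div _ _
    rwa [sum_mul_replicator_eq α Ub U hUbar.ne' hmean, Fintype.card_fin] at hderiv
  · rw [mul_eq_zero, or_iff_right hcoef.ne', sum_sum_sub_sq_div_two_eq_zero_iff]

/-- Along a trajectory of the general evolutionary dynamics `ẋ_m = α(U(m,x)/Ū(x) − 1)` with
`U(m,x) = w m g(N x_m)` and `Ū(x) = (1/M)∑ U(i,x) > 0`, the potential
`L(x) = ∑_m ∫_0^{x_m} w m g(Nz) dz` satisfies
`dL/dt = (α/(M Ū)) ∑_{m,m'} (U(m,x) − U(m',x))²/2 ≥ 0`, with equality iff all payoffs are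
equal. -/
theorem potential_derivative (M : ℕ) (hM : 1 ≤ M) (α N : ℝ) (hα : 0 < α) (hN : 0 < N)
    (w : Fin M → ℝ) (hw : ∀ m, 0 < w m)
    (g : ℝ → ℝ) (hgc : Continuous g) (hgpos : ∀ z, 0 < g z) (hganti : Antitone g)
    (x : ℝ → Fin M → ℝ) (t : ℝ)
    (hUbar : 0 < (1 / (M : ℝ)) * ∑ i, w i * g (N * x t i))
    (hode : ∀ m, HasDerivAt (fun s => x s m)
      (α * (w m * g (N * x t m)
        / ((1 / (M : ℝ)) * ∑ i, w i * g (N * x t i)) - 1)) t) :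
    HasDerivAt (fun s => ∑ m, ∫ z in (0:ℝ)..(x s m), w m * g (N * z))
        (α / ((M : ℝ) * ((1 / (M : ℝ)) * ∑ i, w i * g (N * x t i)))
          * ∑ m, ∑ m', (w m * g (N * x t m) - w m' * g (N * x t m')) ^ 2 / 2) t
    ∧ 0 ≤ α / ((M : ℝ) * ((1 / (M : ℝ)) * ∑ i, w i * g (N * x t i)))
          * ∑ m, ∑ m', (w m * g (N * x t m) - w m' * g (N * x t m')) ^ 2 / 2
    ∧ (α / ((M : ℝ) * ((1 / (M : ℝ)) * ∑ i, w i * g (N * x t i)))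
          * ∑ m, ∑ m', (w m * g (N * x t m) - w m' * g (N * x t m')) ^ 2 / 2 = 0
        ↔ ∀ m m', w m * g (N * x t m) = w m' * g (N * x t m')) :=
  potential_derivative_general M α N hα w g hgc x t hUbar hode
end

section
/- In the asymptotic case g(k) = 1/k: if the population state x* satisfies x*_m = θ_m B_m / Σ_i θ_i B_i for all m (with N x*_m ≥ 1 integers), then every user's expected payoff equals (Σ_i θ_i B_i)/N, and the payoff of a unilateral deviator to channel a is θ_a B_a/(N x*_a + 1) < (Σ_i θ_i B_i)/N; hence x* is a strict Nash equilibrium. -/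
theorem div_mul_div_cancel_self {K : Type*} [Field K] {c : K} (n s : K) (hc : c ≠ 0) :
    c / (n * (c / s)) = s / n := by
  rw [mul_comm, ← div_div, div_div_cancel₀ hc]

theorem asymptotic_strict_nash_general (M N : ℕ)
    (θ B : Fin M → ℝ) (hθ : ∀ m, θ m ∈ Set.Ioo (0:ℝ) 1) (hB : ∀ m, 0 < B m)
    (hint : ∀ m, ∃ km : ℕ, 1 ≤ km ∧
      (km : ℝ) = (N : ℝ) * (θ m * B m / ∑ i, θ i * B i)) :
    (∀ m, θ m * B m / ((N : ℝ) * (θ m * B m / ∑ i, θ i * B i))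
        = (∑ i, θ i * B i) / (N : ℝ)) ∧
    ∀ a, θ a * B a / ((N : ℝ) * (θ a * B a / ∑ i, θ i * B i) + 1)
        < (∑ i, θ i * B i) / (N : ℝ) := by
  have hrate : ∀ m, 0 < θ m * B m := fun m => mul_pos (hθ m).1 (hB m)
  have hpayoff : ∀ m, θ m * B m / ((N : ℝ) * (θ m * B m / ∑ i, θ i * B i))
      = (∑ i, θ i * B i) / (N : ℝ) := fun m => div_mul_div_cancel_self _ _ (hrate m).ne'
  refine ⟨hpayoff, fun a => ?_⟩
  obtain ⟨k, hk, hk_eq⟩ := hint a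
  have hoccupied : (0 : ℝ) < (N : ℝ) * (θ a * B a / ∑ i, θ i * B i) := by
    rw [← hk_eq]
    exact_mod_cast hk
  calc θ a * B a / ((N : ℝ) * (θ a * B a / ∑ i, θ i * B i) + 1)
      < θ a * B a / ((N : ℝ) * (θ a * B a / ∑ i, θ i * B i)) :=
        div_lt_div_of_pos_left (hrate a) hoccupied (lt_add_one _)
    _ = (∑ i, θ i * B i) / (N : ℝ) := hpayoff a

/-- Asymptotic case `g(k) = 1/k`: at the state `x*_m = θ_m B_m / ∑ θ_i B_i` (with `N x*_m ≥ 1`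
integers), every user's payoff equals `(∑ θ_i B_i)/N`, and a unilateral deviator to channel `a`
gets `θ_a B_a/(N x*_a + 1) < (∑ θ_i B_i)/N`; hence `x*` is a strict Nash equilibrium. -/
theorem asymptotic_strict_nash (M N : ℕ) (hM : 1 ≤ M) (hN : 1 ≤ N)
    (θ B : Fin M → ℝ) (hθ : ∀ m, θ m ∈ Set.Ioo (0:ℝ) 1) (hB : ∀ m, 0 < B m)
    (hint : ∀ m, ∃ km : ℕ, 1 ≤ km ∧
      (km : ℝ) = (N : ℝ) * (θ m * B m / ∑ i, θ i * B i)) :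
    (∀ m, θ m * B m / ((N : ℝ) * (θ m * B m / ∑ i, θ i * B i))
        = (∑ i, θ i * B i) / (N : ℝ)) ∧
    ∀ a, θ a * B a / ((N : ℝ) * (θ a * B a / ∑ i, θ i * B i) + 1)
        < (∑ i, θ i * B i) / (N : ℝ) :=
  asymptotic_strict_nash_general M N θ B hθ hB hint
end

section
/- Let f be a probability vector over M channels with f_m > 0 for all m, and suppose Φ_m(f) − Φ_i(f) = Q_m(f) − Q_i(f) for all m, i. Then dΦ/dT along the dynamics ḟ_m = f_m(Q_m(f) − Σ_i f_i Q_i(f)) equals (1/2) Σ_{i,j} f_i f_j (Q_i(f) − Q_j(f))² ≥ 0, with equality iff Q_m(f) = Q_i(f) for all m, i. -/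
/-!
Along the replicator dynamics the rate of change of `∑ Φ_m f_m` is the `f`-weighted covariance
of `Φ` and `Q`, which by symmetrisation is `(1/2) ∑_{i,j} f_i f_j (Φ_i − Φ_j)(Q_i − Q_j)`.
When `Φ` and `Q` differ by a constant this is half the weighted sum of squares
`∑_{i,j} f_i f_j (Q_i − Q_j)²`, which is nonnegative and, for positive weights,
vanishes exactly when `Q` is constant.
-/

open Finset

variable {ι : Type*} [Fintype ι]

theorem sum_sum_mul_mul_sub_mul_sub (f Φ Q : ι → ℝ) :
    ∑ i, ∑ j, f i * f j * ((Φ i - Φ j) * (Q i - Q j))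
      = 2 * ((∑ i, f i) * ∑ i, f i * Φ i * Q i - (∑ i, f i * Φ i) * ∑ i, f i * Q i) := by
  have expand : ∀ i j, f i * f j * ((Φ i - Φ j) * (Q i - Q j))
      = f j * (f i * Φ i * Q i) + f i * (f j * Φ j * Q j)
        - f i * Φ i * (f j * Q j) - f j * Φ j * (f i * Q i) := fun i j => by ring
  simp only [expand, sum_add_distrib, sum_sub_distrib, ← mul_sum, ← sum_mul]
  ring

theorem sum_mul_mul_sub_weightedMean {f : ι → ℝ} (hsum : ∑ i, f i = 1) (Φ Q : ι → ℝ) :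
    ∑ m, Φ m * (f m * (Q m - ∑ i, f i * Q i))
      = (1 / 2) * ∑ i, ∑ j, f i * f j * ((Φ i - Φ j) * (Q i - Q j)) := by
  rw [sum_sum_mul_mul_sub_mul_sub, hsum]
  have expand : ∀ m, Φ m * (f m * (Q m - ∑ i, f i * Q i))
      = f m * Φ m * Q m - f m * Φ m * ∑ i, f i * Q i := fun m => by ring
  simp only [expand, sum_sub_distrib, ← sum_mul]
  ring

theorem sum_sum_mul_mul_sub_sq_nonneg {f : ι → ℝ} (hf : ∀ i, 0 ≤ f i) (Q : ι → ℝ) :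
    0 ≤ ∑ i, ∑ j, f i * f j * (Q i - Q j) ^ 2 :=
  sum_nonneg fun i _ => sum_nonneg fun j _ => by have := hf i; have := hf j; positivity

theorem sum_sum_mul_mul_sub_sq_eq_zero_iff {f : ι → ℝ} (hf : ∀ i, 0 < f i) (Q : ι → ℝ) :
    ∑ i, ∑ j, f i * f j * (Q i - Q j) ^ 2 = 0 ↔ ∀ i j, Q i = Q j := by
  have term_nonneg : ∀ i j, 0 ≤ f i * f j * (Q i - Q j) ^ 2 := fun i j => by
    have := hf i; have := hf j; positivity
  simp only [sum_eq_zero_iff_of_nonneg (fun i _ => sum_nonneg fun j _ => term_nonneg i j),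
    sum_eq_zero_iff_of_nonneg (fun j _ => term_nonneg _ j), mem_univ, true_implies,
    mul_eq_zero, (hf _).ne', false_or, pow_eq_zero_iff two_ne_zero, sub_eq_zero]

/-- If `f` is a fully-mixed probability vector and `Φ_m − Φ_i = Q_m − Q_i` for all `m, i`,
then the derivative of the potential along the learning dynamics
`ḟ_m = f_m(Q_m − ∑_i f_i Q_i)`, namely `∑_m Φ_m ḟ_m`, equals
`(1/2) ∑_{i,j} f_i f_j (Q_i − Q_j)² ≥ 0`, with equality iff all `Q_m` are equal. -/
theorem potential_increasing (M : ℕ) (f Q Φ : Fin M → ℝ)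
    (hf : ∀ m, 0 < f m) (hsum : ∑ m, f m = 1)
    (hΦQ : ∀ m i, Φ m - Φ i = Q m - Q i) :
    (∑ m, Φ m * (f m * (Q m - ∑ i, f i * Q i))
        = (1 / 2) * ∑ i, ∑ j, f i * f j * (Q i - Q j) ^ 2)
    ∧ 0 ≤ (1 / 2) * ∑ i, ∑ j, f i * f j * (Q i - Q j) ^ 2
    ∧ ((1 / 2) * ∑ i, ∑ j, f i * f j * (Q i - Q j) ^ 2 = 0 ↔ ∀ m i, Q m = Q i) := by
  refine ⟨?_, ?_, ?_⟩
  · simp only [sum_mul_mul_sub_weightedMean hsum, hΦQ, ← sq]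
  · exact mul_nonneg (by norm_num) (sum_sum_mul_mul_sub_sq_nonneg (fun m => (hf m).le) Q)
  · rw [mul_eq_zero, or_iff_right (by norm_num), sum_sum_mul_mul_sub_sq_eq_zero_iff hf]
end
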